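/- Every Eisenstein triple, i.e., every (a, b, c) ∈ ℤ³_{≥0} \ {(0,0,0)} with a² − ab + b² = c², is a positive rational multiple of (m(2n − m), n(2m − n), m² − mn + n²) for some positive coprime integers m, n with 1/2 ≤ m/n ≤ 2; conversely, every integer triple that is a positive rational multiple of such a triple is an Eisenstein triple. -/

import Mathlib

/-!
Put `x = b + c` and `y = a + c`. The equation `a² - ab + b² = c²` is equivalent to each of
`a (x + y) = x (2y - x)`, `b (x + y) = y (2x - y)` and `c (x + y) = x² - xy + y²`, so the triple is
`1 / (x + y)` times the parametrised triple at `(x, y)`. Dividing `(x, y)` by its gcd `g` gives a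
coprime pair `(m, n)` and the factor `g² / (x + y)`; the bounds `1/2 ≤ m/n ≤ 2` are the triangle
inequalities `a ≤ b + c`, `b ≤ a + c`. The converse is a polynomial identity.
-/

theorem param_sq_sub_mul_add_sq {R : Type*} [CommRing R] (m n : R) :
    (m * (2 * n - m)) ^ 2 - m * (2 * n - m) * (n * (2 * m - n)) + (n * (2 * m - n)) ^ 2 =
      (m ^ 2 - m * n + n ^ 2) ^ 2 := by
  ring

section LinearOrder

variable {R : Type*} [CommRing R] [LinearOrder R] [IsStrictOrderedRing R]

theorem sq_sub_mul_add_sq_pos {a : R} (ha : a ≠ 0) (b : R) : 0 < a ^ 2 - a * b + b ^ 2 := by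
  nlinarith [sq_nonneg (a - 2 * b), sq_pos_of_ne_zero ha]

theorem sq_sub_mul_add_sq_eq_zero_iff {a b : R} : a ^ 2 - a * b + b ^ 2 = 0 ↔ a = 0 ∧ b = 0 := by
  refine ⟨fun h ↦ ?_, fun ⟨ha, hb⟩ ↦ by simp [ha, hb]⟩
  have ha : a = 0 := by_contra fun ha ↦ (sq_sub_mul_add_sq_pos ha b).ne' h
  subst ha
  exact ⟨rfl, pow_eq_zero_iff two_ne_zero |>.mp (by simpa using h)⟩

theorem le_add_of_sq_sub_mul_add_sq_eq {a b c : R} (ha : 0 ≤ a) (hb : 0 ≤ b) (hc : 0 ≤ c)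
    (h : a ^ 2 - a * b + b ^ 2 = c ^ 2) : a ≤ b + c := by
  have hsq : (a - b) ^ 2 ≤ c ^ 2 := by nlinarith [mul_nonneg ha hb]
  linarith [abs_le_of_sq_le_sq' hsq hc]

end LinearOrder

theorem eq_div_mul_param_of_sq_sub_mul_add_sq_eq {K : Type*} [Field K] {a b c g m n : K}
    (h : a ^ 2 - a * b + b ^ 2 = c ^ 2) (hs : a + b + 2 * c ≠ 0)
    (hm : b + c = g * m) (hn : a + c = g * n) :
    a = g ^ 2 / (a + b + 2 * c) * (m * (2 * n - m)) ∧
      b = g ^ 2 / (a + b + 2 * c) * (n * (2 * m - n)) ∧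
      c = g ^ 2 / (a + b + 2 * c) * (m ^ 2 - m * n + n ^ 2) := by
  refine ⟨?_, ?_, ?_⟩ <;> rw [div_mul_eq_mul_div, eq_div_iff hs]
  · linear_combination h + (2 * g * n - b - c - g * m) * hm + 2 * (b + c) * hn
  · linear_combination h + 2 * (a + c) * hm + (2 * g * m - a - c - g * n) * hn
  · linear_combination -h + (b + c + g * m - g * n) * hm + (a - b + g * n) * hn

theorem exists_coprime_param_of_sq_sub_mul_add_sq_eq {a b c : ℤ} (ha : 0 ≤ a) (hb : 0 ≤ b)
    (hc : 0 ≤ c) (hne : (a, b, c) ≠ (0, 0, 0)) (h : a ^ 2 - a * b + b ^ 2 = c ^ 2) :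
    ∃ m n : ℤ, 0 < m ∧ 0 < n ∧ Int.gcd m n = 1 ∧ n ≤ 2 * m ∧ m ≤ 2 * n ∧
      ∃ t : ℚ, 0 < t ∧
        (a : ℚ) = t * (m * (2 * n - m)) ∧
        (b : ℚ) = t * (n * (2 * m - n)) ∧
        (c : ℚ) = t * (m ^ 2 - m * n + n ^ 2) := by
  have hc0 : 0 < c := by
    refine hc.lt_of_ne fun hc0 ↦ hne ?_
    subst hc0
    obtain ⟨rfl, rfl⟩ := sq_sub_mul_add_sq_eq_zero_iff.mp (by simpa using h)
    rfl
  obtain ⟨g, m, n, hg, hmn, hm, hn⟩ :=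
    Int.exists_gcd_one' (Int.gcd_pos_of_ne_zero_left (a + c) (by omega : b + c ≠ 0))
  have hg' : (0 : ℤ) < g := by exact_mod_cast hg
  have hab := le_add_of_sq_sub_mul_add_sq_eq ha hb hc h
  have hba := le_add_of_sq_sub_mul_add_sq_eq hb ha hc (by linear_combination h)
  have hs : (0 : ℚ) < a + b + 2 * c := by norm_cast; omega
  have hmQ : (b + c : ℚ) = g * m := by rw [mul_comm]; exact_mod_cast hm
  have hnQ : (a + c : ℚ) = g * n := by rw [mul_comm]; exact_mod_cast hn
  obtain ⟨ea, eb, ec⟩ :=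
    eq_div_mul_param_of_sq_sub_mul_add_sq_eq (by exact_mod_cast h) hs.ne' hmQ hnQ
  refine ⟨m, n, pos_of_mul_pos_left (hm ▸ by omega) hg'.le,
    pos_of_mul_pos_left (hn ▸ by omega) hg'.le, hmn, ?_, ?_, _, by positivity, ea, eb, ec⟩
  · exact le_of_mul_le_mul_right (by linarith) hg'
  · exact le_of_mul_le_mul_right (by linarith) hg'

theorem sq_sub_mul_add_sq_eq_of_eq_mul_param {a b c m n : ℤ} (hm : 0 < m) {t : ℚ} (ht : 0 < t)
    (ea : (a : ℚ) = t * (m * (2 * n - m))) (eb : (b : ℚ) = t * (n * (2 * m - n)))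
    (ec : (c : ℚ) = t * (m ^ 2 - m * n + n ^ 2)) :
    (a, b, c) ≠ (0, 0, 0) ∧ a ^ 2 - a * b + b ^ 2 = c ^ 2 := by
  have hc : (c : ℚ) ≠ 0 := by
    rw [ec]
    exact (mul_pos ht (sq_sub_mul_add_sq_pos (by exact_mod_cast hm.ne') _)).ne'
  refine ⟨fun h ↦ hc (by simp_all), ?_⟩
  have : (a ^ 2 - a * b + b ^ 2 : ℚ) = c ^ 2 := by
    rw [ea, eb, ec]
    linear_combination t ^ 2 * param_sq_sub_mul_add_sq (m : ℚ) n
  exact_mod_cast this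

theorem stmt_2 (a b c : ℤ) (ha : 0 ≤ a) (hb : 0 ≤ b) (hc : 0 ≤ c) :
    ((a, b, c) ≠ (0, 0, 0) ∧ a ^ 2 - a * b + b ^ 2 = c ^ 2 ↔
      ∃ m n : ℤ, 0 < m ∧ 0 < n ∧ Int.gcd m n = 1 ∧ n ≤ 2 * m ∧ m ≤ 2 * n ∧
        ∃ t : ℚ, 0 < t ∧
          (a : ℚ) = t * (m * (2 * n - m)) ∧
          (b : ℚ) = t * (n * (2 * m - n)) ∧
          (c : ℚ) = t * (m ^ 2 - m * n + n ^ 2)) := by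
  refine ⟨fun ⟨hne, h⟩ ↦ exists_coprime_param_of_sq_sub_mul_add_sq_eq ha hb hc hne h, ?_⟩
  rintro ⟨m, n, hm, -, -, -, -, t, ht, ea, eb, ec⟩
  exact sq_sub_mul_add_sq_eq_of_eq_mul_param hm ht ea eb ec
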